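/- arXiv:2507.15039 — 4 statements merged into one kernel-verified Lean document; each statement's English description precedes it below -/
import Mathlib

section
/- Every root α ∈ Φ, written (uniquely) as α = Σ_{i∈I} k_i e_i with k_i ∈ ℤ, satisfies either k_i ≥ 0 for all i ∈ I or k_i ≤ 0 for all i ∈ I. -/
set_option linter.unusedSectionVars false

open Finset

noncomputable section

namespace ADE

variable {I : Type*} [Fintype I] [DecidableEq I]

/-- The coefficient matrix of the bilinear form attached to the graph `Γ`:
`-2` on the diagonal, `1` for adjacent pairs of vertices, `0` otherwise. -/
def cartan (G : SimpleGraph I) [DecidableRel G.Adj] : Matrix I I ℤ :=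
  Matrix.of fun i j => if i = j then -2 else if G.Adj i j then 1 else 0

/-- The symmetric bilinear form `B` on `ℤ^I` determined by
`B(e_i,e_i) = -2`, `B(e_i,e_j) = 1` for adjacent `i ≠ j`, and `0` otherwise. -/
def Bform (G : SimpleGraph I) [DecidableRel G.Adj] : LinearMap.BilinForm ℤ (I → ℤ) :=
  Matrix.toBilin' (cartan G)

/-- Negative definiteness of the induced real bilinear form on `ℝ^I`. -/
def NegDef (G : SimpleGraph I) [DecidableRel G.Adj] : Prop :=
  ∀ v : I → ℝ, v ≠ 0 → (∑ i, ∑ j, v i * (cartan G i j : ℝ) * v j) < 0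

/-- `α ∈ ℤ^I` is a root when `B(α,α) = -2`. -/
def IsRoot (G : SimpleGraph I) [DecidableRel G.Adj] (α : I → ℤ) : Prop :=
  Bform G α α = -2

variable (G : SimpleGraph I) [DecidableRel G.Adj]

lemma cartan_symm (i j : I) : cartan G i j = cartan G j i := by
  rcases eq_or_ne i j with h | h
  · subst h; rfl
  · by_cases hadj : G.Adj i j
    · simp [cartan, h, h.symm, hadj, hadj.symm]
    · have h' : ¬ G.Adj j i := fun hc => hadj hc.symm
      simp [cartan, h, h.symm, hadj, h']

lemma Bform_apply (v w : I → ℤ) :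
    Bform G v w = ∑ i, ∑ j, v i * cartan G i j * w j :=
  Matrix.toBilin'_apply _ _ _

lemma Bform_comm (v w : I → ℤ) : Bform G v w = Bform G w v := by
  rw [Bform_apply, Bform_apply, Finset.sum_comm]
  exact Finset.sum_congr rfl fun j _ => Finset.sum_congr rfl fun i _ => by
    rw [cartan_symm]; ring

lemma cartan_diag (i : I) : cartan G i i = -2 := by simp [cartan]

lemma Bform_single (i j : I) :
    Bform G (Pi.single i 1) (Pi.single j 1) = cartan G i j := by
  rw [Bform_apply]
  simp [Pi.single_apply]

lemma Bform_single_self (i : I) :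
    Bform G (Pi.single i 1) (Pi.single i 1) = -2 := by
  rw [Bform_single, cartan_diag]

/-- `IsRoot` is preserved by negation. -/
lemma isRoot_neg {α : I → ℤ} (h : IsRoot G α) : IsRoot G (-α) := by
  unfold IsRoot at h ⊢
  simpa [map_neg] using h

/-- The simple root `e_i` is a root. -/
lemma isRoot_single (i : I) : IsRoot G (Pi.single i 1) := Bform_single_self G i

/-- The reflection `s_i : v ↦ v + B(v,e_i)·e_i`. -/
def reflect (i : I) (v : I → ℤ) : I → ℤ :=
  v + Bform G v (Pi.single i 1) • Pi.single i 1

/-- The reflection `s_i` as a linear map. -/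
def reflectLM (i : I) : (I → ℤ) →ₗ[ℤ] (I → ℤ) :=
  LinearMap.id + (LinearMap.toSpanSingleton ℤ (I → ℤ) (Pi.single i 1)).comp
    ((Bform G).flip (Pi.single i 1))

lemma reflectLM_apply (i : I) (v : I → ℤ) : reflectLM G i v = reflect G i v := by
  simp [reflectLM, reflect, LinearMap.toSpanSingleton_apply]

/-- Reflections are isometries of `B`. -/
lemma Bform_reflect (i : I) (v w : I → ℤ) :
    Bform G (reflect G i v) (reflect G i w) = Bform G v w := by
  have h1 : Bform G (Pi.single i 1) w = Bform G w (Pi.single i 1) := Bform_comm G _ _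
  simp only [reflect, map_add, map_smul, LinearMap.add_apply, LinearMap.smul_apply,
    smul_eq_mul, Bform_single_self, h1]
  ring

lemma reflect_reflect (i : I) (v : I → ℤ) : reflect G i (reflect G i v) = v := by
  have h : Bform G (reflect G i v) (Pi.single i 1) = - Bform G v (Pi.single i 1) := by
    simp only [reflect, map_add, LinearMap.add_apply, map_smul, LinearMap.smul_apply,
      smul_eq_mul, Bform_single_self]
    ring
  conv_lhs => rw [reflect, h]
  rw [reflect, neg_smul, add_neg_cancel_right]

/-- The reflection `s_i` as a linear automorphism of `ℤ^I`. -/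
def reflectEquiv (i : I) : (I → ℤ) ≃ₗ[ℤ] (I → ℤ) where
  __ := reflectLM G i
  invFun := reflect G i
  left_inv := fun v => by
    show reflect G i (reflectLM G i v) = v
    rw [reflectLM_apply]; exact reflect_reflect G i v
  right_inv := fun v => by
    show reflectLM G i (reflect G i v) = v
    rw [reflectLM_apply]; exact reflect_reflect G i v

lemma reflectEquiv_apply (i : I) (v : I → ℤ) : reflectEquiv G i v = reflect G i v :=
  reflectLM_apply G i v

/-- The Weyl group `W`: the subgroup of the group of `ℤ`-linear automorphisms
of `ℤ^I` generated by the reflections `s_i`. -/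
def Weyl : Subgroup ((I → ℤ) ≃ₗ[ℤ] (I → ℤ)) :=
  Subgroup.closure (Set.range (reflectEquiv G))

lemma reflectEquiv_inv (i : I) : (reflectEquiv G i)⁻¹ = reflectEquiv G i := by
  apply LinearEquiv.toLinearMap_injective
  apply LinearMap.ext
  intro v
  have h1 : ((reflectEquiv G i)⁻¹ : (I → ℤ) ≃ₗ[ℤ] (I → ℤ)) v = (reflectEquiv G i).symm v := rfl
  show ((reflectEquiv G i)⁻¹ : (I → ℤ) ≃ₗ[ℤ] (I → ℤ)) v = reflectEquiv G i v
  rw [h1, reflectEquiv_apply]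
  rfl

lemma isRoot_reflect (i : I) {α : I → ℤ} (h : IsRoot G α) : IsRoot G (reflect G i α) := by
  unfold IsRoot at h ⊢
  rw [Bform_reflect]; exact h

/-- Every element of the Weyl group maps roots to roots. -/
lemma weyl_isRoot {w : (I → ℤ) ≃ₗ[ℤ] (I → ℤ)} (hw : w ∈ Weyl G) :
    ∀ α : I → ℤ, IsRoot G α → IsRoot G (w α) := by
  have main : (∀ α, IsRoot G α → IsRoot G (w α)) ∧ (∀ α, IsRoot G α → IsRoot G (w⁻¹ α)) := by
    induction hw using Subgroup.closure_induction with
    | mem x hx =>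
        obtain ⟨i, rfl⟩ := hx
        constructor
        · intro α hα; rw [reflectEquiv_apply]; exact isRoot_reflect G i hα
        · intro α hα; rw [reflectEquiv_inv, reflectEquiv_apply]; exact isRoot_reflect G i hα
    | one => exact ⟨fun α h => h, fun α h => by simpa using h⟩
    | mul x y hx hy ihx ihy =>
        refine ⟨fun α h => ?_, fun α h => ?_⟩
        · exact ihx.1 _ (ihy.1 _ h)
        · rw [mul_inv_rev]
          exact ihy.2 _ (ihx.2 _ h)
    | inv x hx ihx =>
        refine ⟨ihx.2, fun α h => ?_⟩
        rw [inv_inv]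
        exact ihx.1 α h
  exact main.1

/-- The type of roots. -/
def Root := {α : I → ℤ // IsRoot G α}

/-- The simple root `e_i` as an element of `Root`. -/
def simpleRoot (i : I) : Root G := ⟨Pi.single i 1, isRoot_single G i⟩

/-- Negation of a root. -/
def negRoot (α : Root G) : Root G := ⟨-α.1, isRoot_neg G α.2⟩

/-- The generator `s_i` as an element of the Weyl group. -/
def sGen (i : I) : ↥(Weyl G) := ⟨reflectEquiv G i, Subgroup.subset_closure ⟨i, rfl⟩⟩

/-- Action of a Weyl group element on roots. -/
def rootSmul (w : ↥(Weyl G)) (α : Root G) : Root G :=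
  ⟨(w : (I → ℤ) ≃ₗ[ℤ] (I → ℤ)) α.1, weyl_isRoot G w.2 α.1 α.2⟩

/-- The equivalence relation identifying a root `α` with `±α`. -/
def rootSetoid : Setoid (Root G) where
  r α β := α.1 = β.1 ∨ α.1 = -β.1
  iseqv := by
    refine ⟨fun α => Or.inl rfl, ?_, ?_⟩
    · rintro α β (h | h)
      · exact Or.inl h.symm
      · exact Or.inr (by rw [h, neg_neg])
    · rintro α β γ (h₁ | h₁) (h₂ | h₂)
      · exact Or.inl (h₁.trans h₂)
      · exact Or.inr (h₁.trans h₂)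
      · exact Or.inr (by rw [h₁, h₂])
      · exact Or.inl (by rw [h₁, h₂, neg_neg])

/-- `Φ/±`: the quotient of the set of roots by the involution `α ↦ -α`. -/
def RootMod := Quotient (rootSetoid G)

/-- The class of a root in `Φ/±`. -/
def rcls (α : Root G) : RootMod G := Quotient.mk (rootSetoid G) α

/-- The class `[e_i]` of a simple root in `Φ/±`. -/
def cls (i : I) : RootMod G := rcls G (simpleRoot G i)

/-- Action of a Weyl group element on `Φ/±`. -/
def rmodSmul (w : ↥(Weyl G)) : RootMod G → RootMod G :=
  Quotient.map (rootSmul G w) (by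
    rintro α β (h | h)
    · exact Or.inl (by simp [rootSmul, h])
    · exact Or.inr (by simp [rootSmul, h, map_neg]))

/-- The action of `w ∈ W` on `ℤΦ` (the free abelian group on the roots). -/
def wZPhi (w : ↥(Weyl G)) : (Root G →₀ ℤ) →+ (Root G →₀ ℤ) :=
  Finsupp.mapDomain.addMonoidHom (rootSmul G w)

/-- The action of `w ∈ W` on `ℤ[Φ/±]`. -/
def wZQ (w : ↥(Weyl G)) : (RootMod G →₀ ℤ) →+ (RootMod G →₀ ℤ) :=
  Finsupp.mapDomain.addMonoidHom (rmodSmul G w)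

/-- The canonical projection `π : ℤΦ → ℤ[Φ/±]`, `T_α ↦ t_{[α]}`. -/
def piHom : (Root G →₀ ℤ) →+ (RootMod G →₀ ℤ) :=
  Finsupp.mapDomain.addMonoidHom (rcls G)

/-- The action of `w ∈ W` on `ℚ ⊗ ℤΦ = (Φ →₀ ℚ)`. -/
def wZPhiQ (w : ↥(Weyl G)) : (Root G →₀ ℚ) →ₗ[ℚ] (Root G →₀ ℚ) :=
  Finsupp.lmapDomain ℚ ℚ (rootSmul G w)

/-- The action of `w ∈ W` on `ℚ ⊗ ℤ[Φ/±] = (Φ/± →₀ ℚ)`. -/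
def wZQQ (w : ↥(Weyl G)) : (RootMod G →₀ ℚ) →ₗ[ℚ] (RootMod G →₀ ℚ) :=
  Finsupp.lmapDomain ℚ ℚ (rmodSmul G w)

/-- The projection `ℚ ⊗ ℤΦ → ℚ ⊗ ℤ[Φ/±]`. -/
def piHomQ : (Root G →₀ ℚ) →ₗ[ℚ] (RootMod G →₀ ℚ) :=
  Finsupp.lmapDomain ℚ ℚ (rcls G)

/-- The subgroup `P̄ ⊂ ℤΦ` generated by the elements `T_α - T_{-α}`. -/
def Pbar : AddSubgroup (Root G →₀ ℤ) :=
  AddSubgroup.closure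
    {x | ∃ α : Root G, x = Finsupp.single α 1 - Finsupp.single (negRoot G α) 1}

end ADE


open ADE

variable {I : Type*} [Fintype I] [DecidableEq I]

/-!
Split a root as `α = α⁺ - α⁻`. Since the off-diagonal entries of the matrix of `B` are
nonnegative and `α⁺`, `α⁻` have disjoint supports, `B(α⁺, α⁻) ≥ 0`. The form `B` is even and
negative definite, so `B(v, v) ≤ -2` for every `v ≠ 0`. If neither part vanished we would get
`B(α, α) = B(α⁺, α⁺) - 2 B(α⁺, α⁻) + B(α⁻, α⁻) ≤ -4`.
-/

namespace LinearMap.BilinForm.IsSymm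

variable {M : Type*} [AddCommGroup M] [Module ℤ M]

theorem even_apply_self_of_span_eq_top {B : LinearMap.BilinForm ℤ M} (hB : B.IsSymm)
    {s : Set M} (hs : Submodule.span ℤ s = ⊤) (h : ∀ x ∈ s, Even (B x x)) (v : M) :
    Even (B v v) := by
  have hv : v ∈ Submodule.span ℤ s := hs ▸ Submodule.mem_top
  induction hv using Submodule.span_induction with
  | mem x hx => exact h x hx
  | zero => simp
  | add x y _ _ hx hy =>
    have hexpand : B (x + y) (x + y) = B x x + B y y + 2 * B x y := by
      simp only [map_add, LinearMap.add_apply, hB.eq y x]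
      ring
    rw [hexpand]
    exact (hx.add hy).add (even_two_mul _)
  | smul a x _ hx =>
    simpa only [map_smul, LinearMap.smul_apply, smul_eq_mul, ← mul_assoc]
      using hx.mul_left (a * a)

end LinearMap.BilinForm.IsSymm

namespace ADE

variable (G : SimpleGraph I) [DecidableRel G.Adj]

theorem cartan_nonneg_of_ne {i j : I} (h : i ≠ j) : 0 ≤ cartan G i j := by
  simp only [cartan, Matrix.of_apply, if_neg h]
  split <;> norm_num

theorem isSymm_Bform : (Bform G).IsSymm := ⟨Bform_comm G⟩

theorem even_Bform_self (v : I → ℤ) : Even (Bform G v v) := by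
  refine (isSymm_Bform G).even_apply_self_of_span_eq_top (Pi.basisFun ℤ I).span_eq ?_ v
  rintro _ ⟨i, rfl⟩
  rw [Pi.basisFun_apply, Bform_single_self]
  exact even_neg.mpr even_two

theorem Bform_self_neg (hneg : NegDef G) {v : I → ℤ} (hv : v ≠ 0) : Bform G v v < 0 := by
  have hvℝ : (fun i => (v i : ℝ)) ≠ 0 := fun h =>
    hv (funext fun i => by simpa using congrFun h i)
  have hcast : ((Bform G v v : ℤ) : ℝ) = ∑ i, ∑ j, (v i : ℝ) * (cartan G i j : ℝ) * v j := by
    rw [Bform_apply]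
    push_cast
    rfl
  exact_mod_cast hcast ▸ hneg _ hvℝ

theorem Bform_self_le_neg_two (hneg : NegDef G) {v : I → ℤ} (hv : v ≠ 0) :
    Bform G v v ≤ -2 := by
  obtain ⟨k, hk⟩ := even_Bform_self G v
  have := Bform_self_neg G hneg hv
  omega

theorem Bform_nonneg_of_disjoint_support {p n : I → ℤ} (hp : 0 ≤ p) (hn : 0 ≤ n)
    (hd : ∀ i, p i = 0 ∨ n i = 0) : 0 ≤ Bform G p n := by
  rw [Bform_apply]
  refine sum_nonneg fun i _ => sum_nonneg fun j _ => ?_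
  rcases eq_or_ne i j with rfl | hij
  · rcases hd i with h | h <;> simp [h]
  · exact mul_nonneg (mul_nonneg (hp i) (cartan_nonneg_of_ne G hij)) (hn j)

theorem Bform_sub_self (p n : I → ℤ) :
    Bform G (p - n) (p - n) = Bform G p p - 2 * Bform G p n + Bform G n n := by
  simp only [map_sub, LinearMap.sub_apply, Bform_comm G n p]
  ring

end ADE

/-- every root has either all coordinates `≥ 0` or all coordinates `≤ 0`. -/
theorem root_coords_all_nonneg_or_all_nonpos (G : SimpleGraph I) [DecidableRel G.Adj]
    (hneg : NegDef G) (α : I → ℤ) (hα : IsRoot G α) :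
    (∀ i : I, 0 ≤ α i) ∨ (∀ i : I, α i ≤ 0) := by
  by_contra hmixed
  rw [not_or] at hmixed
  have hposPart : α⁺ ≠ 0 := fun h => hmixed.2 (posPart_eq_zero.mp h)
  have hnegPart : α⁻ ≠ 0 := fun h => hmixed.1 (negPart_eq_zero.mp h)
  have hdisj : ∀ i, α⁺ i = 0 ∨ α⁻ i = 0 := fun i => by
    simp only [Pi.posPart_apply, Pi.negPart_apply, posPart_eq_zero, negPart_eq_zero]
    exact le_total _ _
  have hcross := Bform_nonneg_of_disjoint_support G (posPart_nonneg α) (negPart_nonneg α) hdisj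
  have hroot : Bform G (α⁺ - α⁻) (α⁺ - α⁻) = -2 := by rwa [posPart_sub_negPart]
  rw [Bform_sub_self] at hroot
  linarith [Bform_self_le_neg_two G hneg hposPart, Bform_self_le_neg_two G hneg hnegPart]
end
end

section
/- The Weyl group W, i.e. the subgroup of the group of ℤ-linear automorphisms of ℤ^I generated by the reflections s_i (i ∈ I), is a finite group. -/
/-!
Negative definiteness of `B` gives `B(v,v) ≤ -c‖v‖²` for some `c > 0` (compactness of the unit
sphere), so the roots, being integer vectors with `B(α,α) = -2`, lie in a ball and are finitely
many. Each `w ∈ W` preserves `B`, hence maps every simple root `e_i` to a root; as `w` is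
determined by the `w e_i`, the group `W` injects into the finite set of maps `I → Φ`.
-/
set_option linter.unusedSectionVars false

open Finset

noncomputable section

theorem exists_pos_le_neg_mul_sq_norm {E : Type*} [NormedAddCommGroup E] [NormedSpace ℝ E]
    [ProperSpace E] {Q : E → ℝ} (hQ : Continuous Q) (hhom : ∀ (t : ℝ) v, Q (t • v) = t ^ 2 * Q v)
    (hneg : ∀ v ≠ 0, Q v < 0) : ∃ c > 0, ∀ v, Q v ≤ -c * ‖v‖ ^ 2 := by
  have hQ0 : Q 0 = 0 := by simpa using hhom 0 0
  rcases subsingleton_or_nontrivial E with _ | _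
  · exact ⟨1, one_pos, fun v => by simp [Subsingleton.elim v 0, hQ0]⟩
  obtain ⟨x, hx, hmax⟩ := (isCompact_sphere (0 : E) 1).exists_isMaxOn
    (NormedSpace.sphere_nonempty.2 zero_le_one) hQ.continuousOn
  refine ⟨-Q x, neg_pos.2 (hneg x (ne_zero_of_mem_unit_sphere ⟨x, hx⟩)), fun v => ?_⟩
  rcases eq_or_ne v 0 with rfl | hv
  · simp [hQ0]
  have hnv : 0 < ‖v‖ := norm_pos_iff.2 hv
  have hunit : ‖v‖⁻¹ • v ∈ Metric.sphere (0 : E) 1 := by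
    simp [norm_smul, hnv.ne']
  calc Q v = ‖v‖ ^ 2 * Q (‖v‖⁻¹ • v) := by
        rw [hhom, ← mul_assoc, ← mul_pow, mul_inv_cancel₀ hnv.ne', one_pow, one_mul]
    _ ≤ ‖v‖ ^ 2 * Q x := by gcongr; exact hmax hunit
    _ = -(-Q x) * ‖v‖ ^ 2 := by ring

theorem Module.Basis.finite_of_forall_apply_mem {ι R M N : Type*} [Finite ι] [Semiring R]
    [AddCommMonoid M] [AddCommMonoid N] [Module R M] [Module R N] (b : Basis ι R M)
    {S : Set N} (hS : S.Finite) {W : Set (M ≃ₗ[R] N)} (hW : ∀ w ∈ W, ∀ i, w (b i) ∈ S) :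
    W.Finite :=
  Set.Finite.of_injOn (f := fun w i => w (b i)) (t := Set.univ.pi fun _ => S)
    (fun w hw => Set.mem_univ_pi.2 (hW w hw)) (fun _ _ _ _ h => b.ext' (congrFun h))
    (Set.Finite.pi fun _ => hS)

namespace ADE

variable {I : Type*} [Fintype I] [DecidableEq I] (G : SimpleGraph I) [DecidableRel G.Adj]

theorem finite_setOf_isRoot (hneg : NegDef G) : {α : I → ℤ | IsRoot G α}.Finite := by
  obtain ⟨c, hc, hcoercive⟩ := exists_pos_le_neg_mul_sq_norm
    (Q := fun v : I → ℝ => ∑ i, ∑ j, v i * (cartan G i j : ℝ) * v j) (by fun_prop)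
    (fun t v => by simp only [Pi.smul_apply, smul_eq_mul, Finset.mul_sum]; ring_nf) hneg
  refine ((isCompact_closedBall (0 : I → ℤ) √(2 / c)).finite_of_discrete).subset fun α hα => ?_
  have hQα : ∑ i, ∑ j, (α i : ℝ) * cartan G i j * α j = -2 := by
    exact_mod_cast (Bform_apply G α α).symm.trans hα
  set v : I → ℝ := fun i => α i
  have hv : ‖v‖ ≤ √(2 / c) := by
    refine Real.le_sqrt_of_sq_le ?_
    rw [le_div_iff₀ hc]
    linarith [hcoercive v, hQα]
  rw [mem_closedBall_zero_iff, pi_norm_le_iff_of_nonneg (Real.sqrt_nonneg _)]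
  intro i
  rw [← Int.norm_cast_real]
  exact (norm_le_pi_norm v i).trans hv

end ADE

open ADE

variable {I : Type*} [Fintype I] [DecidableEq I]

/-- the Weyl group `W` is finite. -/
theorem weyl_group_finite (G : SimpleGraph I) [DecidableRel G.Adj] (hneg : NegDef G) :
    (Weyl G : Set ((I → ℤ) ≃ₗ[ℤ] (I → ℤ))).Finite :=
  (Pi.basisFun ℤ I).finite_of_forall_apply_mem (finite_setOf_isRoot G hneg) fun w hw i => by
    rw [Pi.basisFun_apply]
    exact weyl_isRoot G hw _ (isRoot_single G i)
end
end

section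
/- Assume I is nonempty. Then there is no W-equivariant group homomorphism s : ℤ[Φ/±] → ℤΦ with π ∘ s = id; that is, the short exact sequence of W-representations 0 → P̄ → ℤΦ → ℤ[Φ/±] → 0 (where P̄ is the subgroup of ℤΦ generated by the T_α − T_{−α}) is not W-equivariantly split. -/
set_option linter.unusedSectionVars false

open Finset

noncomputable section

/-!
The simple reflection `s_i` swaps the roots `e_i` and `-e_i`, so it fixes the class
`c = [e_i]`. An equivariant section `s` would therefore send `t_c` to an `s_i`-invariant
`x ∈ ℤΦ`, whose coefficients at `e_i` and `-e_i` agree. But `π x = t_c` says that these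
two coefficients add up to `1`, which is impossible in `ℤ`.
-/

namespace ADE

variable {I : Type*} [Fintype I] [DecidableEq I] (G : SimpleGraph I) [DecidableRel G.Adj]

lemma reflect_single_self (i : I) : reflect G i (Pi.single i 1) = -Pi.single i 1 := by
  rw [reflect, Bform_single_self]
  module

lemma rootSmul_injective (w : ↥(Weyl G)) : Function.Injective (rootSmul G w) :=
  fun _ _ h => Subtype.ext ((w : (I → ℤ) ≃ₗ[ℤ] (I → ℤ)).injective (congrArg Subtype.val h))

lemma rootSmul_sGen_simpleRoot (i : I) :
    rootSmul G (sGen G i) (simpleRoot G i) = negRoot G (simpleRoot G i) :=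
  Subtype.ext ((reflectEquiv_apply G i _).trans (reflect_single_self G i))

lemma negRoot_ne (α : Root G) : negRoot G α ≠ α := by
  intro h
  have hzero : α.1 = 0 := funext fun j => by
    have := congrFun (congrArg Subtype.val h) j
    simp only [negRoot, Pi.neg_apply] at this
    simp only [Pi.zero_apply]
    omega
  have := α.2
  rw [IsRoot, hzero, map_zero] at this
  omega

lemma rcls_eq_rcls_iff {α β : Root G} : rcls G β = rcls G α ↔ β = α ∨ β = negRoot G α := by
  refine ⟨fun h => ?_, ?_⟩
  · rcases (Quotient.exact h : (rootSetoid G).r β α) with h | h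
    exacts [Or.inl (Subtype.ext h), Or.inr (Subtype.ext h)]
  · rintro (rfl | rfl)
    exacts [rfl, Quotient.sound (Or.inr rfl)]

lemma rcls_negRoot (α : Root G) : rcls G (negRoot G α) = rcls G α :=
  rcls_eq_rcls_iff G |>.2 (Or.inr rfl)

lemma rmodSmul_rcls (w : ↥(Weyl G)) (α : Root G) :
    rmodSmul G w (rcls G α) = rcls G (rootSmul G w α) :=
  Quotient.map_mk _ _ _

lemma piHom_apply_rcls (y : Root G →₀ ℤ) (α : Root G) :
    piHom G y (rcls G α) = y α + y (negRoot G α) := by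
  induction y using Finsupp.induction_linear with
  | zero => simp
  | add y z hy hz => simp only [map_add, Finsupp.add_apply, hy, hz]; ring
  | single β n =>
    have hne := (negRoot_ne G α).symm
    rw [piHom, Finsupp.mapDomain.addMonoidHom_apply, Finsupp.mapDomain_single]
    by_cases h : rcls G β = rcls G α
    · rcases (rcls_eq_rcls_iff G).1 h with rfl | rfl <;> simp [h, hne, hne.symm]
    · obtain ⟨hα, hnα⟩ : β ≠ α ∧ β ≠ negRoot G α := by
        simpa [not_or] using mt (rcls_eq_rcls_iff G).2 h
      simp [h, hα, hnα]

end ADE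

open ADE

variable {I : Type*} [Fintype I] [DecidableEq I]

theorem no_equivariant_splitting_general
    (G : SimpleGraph I) [DecidableRel G.Adj] [Nonempty I] :
    ¬ ∃ s : (RootMod G →₀ ℤ) →+ (Root G →₀ ℤ),
        (∀ (w : ↥(Weyl G)) (x : RootMod G →₀ ℤ), s (wZQ G w x) = wZPhi G w (s x)) ∧
        (∀ x : RootMod G →₀ ℤ, piHom G (s x) = x) := by
  rintro ⟨s, hequiv, hsect⟩
  obtain ⟨i⟩ := ‹Nonempty I›
  set α := simpleRoot G i
  set σ := sGen G i
  have hσα : rootSmul G σ α = negRoot G α := rootSmul_sGen_simpleRoot G i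
  set c := rcls G α
  have hσc : rmodSmul G σ c = c := by rw [rmodSmul_rcls, hσα, rcls_negRoot]
  set x := s (Finsupp.single c 1)
  have hσx : Finsupp.mapDomain (rootSmul G σ) x = x := by
    have := hequiv σ (Finsupp.single c 1)
    rw [wZQ, Finsupp.mapDomain.addMonoidHom_apply, Finsupp.mapDomain_single, hσc] at this
    exact this.symm
  have hsym : x (negRoot G α) = x α := calc
    x (negRoot G α) = Finsupp.mapDomain (rootSmul G σ) x (rootSmul G σ α) := by rw [hσx, hσα]
    _ = x α := Finsupp.mapDomain_apply (rootSmul_injective G σ) x α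
  have hsum : x α + x (negRoot G α) = 1 := by
    rw [← piHom_apply_rcls, hsect, Finsupp.single_eq_same]
  omega

/-- if `I` is nonempty there is no `W`-equivariant section of
`π : ℤΦ → ℤ[Φ/±]`; i.e. the short exact sequence `0 → P̄ → ℤΦ → ℤ[Φ/±] → 0` of
`W`-representations is not `W`-equivariantly split. -/
theorem no_equivariant_splitting
    (G : SimpleGraph I) [DecidableRel G.Adj] [Nonempty I] (hneg : NegDef G) :
    ¬ ∃ s : (RootMod G →₀ ℤ) →+ (Root G →₀ ℤ),
        (∀ (w : ↥(Weyl G)) (x : RootMod G →₀ ℤ), s (wZQ G w x) = wZPhi G w (s x)) ∧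
        (∀ x : RootMod G →₀ ℤ, piHom G (s x) = x) :=
  no_equivariant_splitting_general G
end
end

section
/- Let M be a torsion-free abelian group, B : M × M → ℤ a symmetric biadditive form, and x, y ∈ M with x ≠ y, B(x,x) = B(y,y) = −2 and B(x,y) = −2. Define the sequence (c_k)_{k≥0} in M by c_0 = x, c_{2m+1} = s_y(c_{2m}) and c_{2m+2} = s_x(c_{2m+1}) (that is, the sequence x, s_y x, s_x s_y x, s_y s_x s_y x, …). Then the elements c_k are pairwise distinct; in particular M contains infinitely many elements v with B(v,v) = −2. -/
/-!
On `span {x, y}` both `B(·, x)` and `B(·, y)` send `p x + q y` to `-2 (p + q)`, so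
`B(p x + q y, p x + q y) = -2 (p + q)²`. If `c_k = p x + q y` with `p + q = (-1)^k`, the next
reflection therefore shifts one coefficient by `2` so that `p - q` grows by `2` and `p + q`
changes sign; by induction `p - q = 2k + 1`. Since `x ≠ y` and `B(x, x) = B(y, x) ≠ 0`, the
elements `x`, `y` are linearly independent over `ℤ`, so `k` is determined by `c_k`.
-/

namespace PicardLefschetz

variable {M : Type*} [AddCommGroup M]

theorem apply_zsmul_add_zsmul_left (B : M → M → ℤ)
    (haddl : ∀ u v w : M, B (u + v) w = B u w + B v w) (p q : ℤ) (x y w : M) :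
    B (p • x + q • y) w = p * B x w + q * B y w := by
  let f : M →+ ℤ := AddMonoidHom.mk' (B · w) (haddl · · w)
  change f (p • x + q • y) = p * f x + q * f y
  simp only [map_add, map_zsmul, smul_eq_mul]

theorem linearIndependent_pair_of_apply_eq [NoZeroSMulDivisors ℤ M] (B : M → M → ℤ)
    (haddl : ∀ u v w : M, B (u + v) w = B u w + B v w) {x y : M} (hxy : x ≠ y)
    (hx : B x x ≠ 0) (hyx : B y x = B x x) : LinearIndependent ℤ ![x, y] := by
  refine LinearIndependent.pair_iff.mpr fun s t hst => ?_
  have hts : t = -s := by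
    have h := congrArg (B · x) hst
    simp only [apply_zsmul_add_zsmul_left B haddl, hyx] at h
    have h0 : B 0 x = 0 := by simpa using apply_zsmul_add_zsmul_left B haddl 0 0 x x x
    rw [h0, ← add_mul, mul_eq_zero] at h
    exact eq_neg_of_add_eq_zero_right (h.resolve_right hx)
  subst hts
  have hs : s • (x - y) = 0 := by rw [smul_sub, sub_eq_add_neg, ← neg_smul]; exact hst
  obtain rfl : s = 0 := (smul_eq_zero.mp hs).resolve_right (sub_ne_zero.mpr hxy)
  simp

theorem apply_self_zsmul_add_zsmul (B : M → M → ℤ) (hsymm : ∀ v w : M, B v w = B w v)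
    (haddl : ∀ u v w : M, B (u + v) w = B u w + B v w) {x y : M}
    (hxx : B x x = -2) (hyy : B y y = -2) (hxy : B x y = -2) (p q : ℤ) :
    B (p • x + q • y) (p • x + q • y) = -2 * (p + q) ^ 2 := by
  rw [apply_zsmul_add_zsmul_left B haddl, hsymm x, hsymm y, apply_zsmul_add_zsmul_left B haddl,
    apply_zsmul_add_zsmul_left B haddl, hxx, hyy, hsymm y, hxy]
  ring

theorem exists_coeffs_of_reflection_orbit (B : M → M → ℤ)
    (haddl : ∀ u v w : M, B (u + v) w = B u w + B v w) {x y : M}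
    (hxx : B x x = -2) (hyy : B y y = -2) (hxy : B x y = -2) (hyx : B y x = -2)
    {c : ℕ → M} (hc0 : c 0 = x)
    (hodd : ∀ m : ℕ, c (2 * m + 1) = c (2 * m) + B (c (2 * m)) y • y)
    (heven : ∀ m : ℕ, c (2 * m + 2) = c (2 * m + 1) + B (c (2 * m + 1)) x • x) (k : ℕ) :
    ∃ p q : ℤ, c k = p • x + q • y ∧ p - q = 2 * k + 1 ∧ p + q = (-1) ^ k := by
  have hBx (p q : ℤ) : B (p • x + q • y) x = -2 * (p + q) := by
    rw [apply_zsmul_add_zsmul_left B haddl, hxx, hyx]; ring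
  have hBy (p q : ℤ) : B (p • x + q • y) y = -2 * (p + q) := by
    rw [apply_zsmul_add_zsmul_left B haddl, hxy, hyy]; ring
  induction k with
  | zero => exact ⟨1, 0, by simp [hc0], by simp, by simp⟩
  | succ k ih =>
    obtain ⟨p, q, hck, hpq, hsum⟩ := ih
    obtain ⟨m, rfl | rfl⟩ := Nat.even_or_odd' k
    · have hsum' : p + q = 1 := by simpa [pow_mul] using hsum
      refine ⟨p, q - 2, ?_, by push_cast at hpq ⊢; linarith, ?_⟩
      · rw [hodd, hck, hBy, hsum', sub_smul]; module
      · rw [pow_succ, pow_mul]; norm_num; linarith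
    · have hsum' : p + q = -1 := by simpa [pow_succ, pow_mul] using hsum
      refine ⟨p + 2, q, ?_, by push_cast at hpq ⊢; linarith, ?_⟩
      · rw [heven, hck, hBx, hsum', add_smul]; module
      · rw [pow_succ, pow_succ, pow_mul]; norm_num; linarith

end PicardLefschetz

open PicardLefschetz in
theorem reflections_orbit_infinite_general
    {M : Type*} [AddCommGroup M] [NoZeroSMulDivisors ℤ M]
    (B : M → M → ℤ)
    (hsymm : ∀ v w : M, B v w = B w v)
    (haddl : ∀ u v w : M, B (u + v) w = B u w + B v w)
    (x y : M) (hxy : x ≠ y)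
    (hxx : B x x = -2) (hyy : B y y = -2) (hxy2 : B x y = -2)
    (c : ℕ → M) (hc0 : c 0 = x)
    (hodd : ∀ m : ℕ, c (2 * m + 1) = c (2 * m) + B (c (2 * m)) y • y)
    (heven : ∀ m : ℕ, c (2 * m + 2) = c (2 * m + 1) + B (c (2 * m + 1)) x • x) :
    Function.Injective c ∧ {v : M | B v v = -2}.Infinite := by
  have hyx : B y x = -2 := hsymm y x ▸ hxy2
  have hcoeffs := exists_coeffs_of_reflection_orbit B haddl hxx hyy hxy2 hyx hc0 hodd heven
  have hind : LinearIndependent ℤ ![x, y] :=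
    linearIndependent_pair_of_apply_eq B haddl hxy (by rw [hxx]; decide) (hyx.trans hxx.symm)
  have hinj : Function.Injective c := by
    intro i j hij
    obtain ⟨p, q, hci, hpq, -⟩ := hcoeffs i
    obtain ⟨p', q', hcj, hpq', -⟩ := hcoeffs j
    obtain ⟨rfl, rfl⟩ := hind.eq_of_pair (hci.symm.trans (hij.trans hcj))
    omega
  refine ⟨hinj, Set.infinite_of_injective_forall_mem hinj fun k => ?_⟩
  obtain ⟨p, q, hck, -, hsum⟩ := hcoeffs k
  change B (c k) (c k) = -2
  rw [hck, apply_self_zsmul_add_zsmul B hsymm haddl hxx hyy hxy2, hsum, ← pow_mul]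
  simp

/-- for a symmetric biadditive form `B` on a torsion-free abelian group `M`
and `x ≠ y` with `B(x,x) = B(y,y) = B(x,y) = -2`, the sequence
`x, s_y x, s_x s_y x, s_y s_x s_y x, …` of Picard–Lefschetz reflections
(`s_v(w) = w + B(w,v)·v`) consists of pairwise distinct elements; in particular `M`
contains infinitely many elements `v` with `B(v,v) = -2`. -/
theorem reflections_orbit_infinite
    {M : Type*} [AddCommGroup M] [NoZeroSMulDivisors ℤ M]
    (B : M → M → ℤ)
    (hsymm : ∀ v w : M, B v w = B w v)
    (haddl : ∀ u v w : M, B (u + v) w = B u w + B v w)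
    (haddr : ∀ u v w : M, B u (v + w) = B u v + B u w)
    (x y : M) (hxy : x ≠ y)
    (hxx : B x x = -2) (hyy : B y y = -2) (hxy2 : B x y = -2)
    (c : ℕ → M) (hc0 : c 0 = x)
    (hodd : ∀ m : ℕ, c (2 * m + 1) = c (2 * m) + B (c (2 * m)) y • y)
    (heven : ∀ m : ℕ, c (2 * m + 2) = c (2 * m + 1) + B (c (2 * m + 1)) x • x) :
    Function.Injective c ∧ {v : M | B v v = -2}.Infinite :=
  reflections_orbit_infinite_general B hsymm haddl x y hxy hxx hyy hxy2 c hc0 hodd heven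
end
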